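/- There exists a rooted tree T on m ≥ n/2 vertices with a_t(T) = 1, constructed as follows: the root v has children v_0, v_1, …, v_{i+j} where j = ⌈√(n/2)⌉ and i is the largest integer with 2^i ≤ j; v_0 is a leaf, v_ℓ has 2^ℓ − 1 leaf children for 1 ≤ ℓ ≤ i, and v_ℓ has j leaf children for i < ℓ ≤ i+j. Moreover, n/2 ≤ |V(T)| ≤ (1+o(1))·n/2, and the root can acquire all the weight. -/

import Mathlib

open Filter

/-- A total acquisition move in graph `G`. -/
def AcqMove {V : Type*} [DecidableEq V] (G : SimpleGraph V) (w w' : V → ℕ) : Prop :=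
  ∃ u v, G.Adj u v ∧ 0 < w u ∧ w u ≤ w v ∧
    w' = Function.update (Function.update w u 0) v (w v + w u)

/-- Reachability by acquisition moves. -/
def AcqReach {V : Type*} [DecidableEq V] (G : SimpleGraph V) : (V → ℕ) → (V → ℕ) → Prop :=
  Relation.ReflTransGen (AcqMove G)

/-- No legal acquisition move remains. -/
def AcqMaximal {V : Type*} [DecidableEq V] (G : SimpleGraph V) (w : V → ℕ) : Prop :=
  ¬ ∃ w', AcqMove G w w'

/-- The size of the residual set. -/
noncomputable def residualCard {V : Type*} (w : V → ℕ) : ℕ :=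
  Nat.card {v : V // 0 < w v}

/-- The total acquisition number of `G`. -/
noncomputable def atNum {V : Type*} [DecidableEq V] (G : SimpleGraph V) : ℕ :=
  sInf { k | ∃ w, AcqReach G (fun _ => 1) w ∧ AcqMaximal G w ∧ residualCard w = k }

namespace Stmt13

/-- `j = ⌈√(n/2)⌉`. -/
noncomputable def jj (n : ℕ) : ℕ := ⌈Real.sqrt ((n : ℝ) / 2)⌉₊

/-- `i` is the largest integer with `2^i ≤ j`. -/
noncomputable def ii (n : ℕ) : ℕ := Nat.log 2 (jj n)

/-- The child `v_ℓ` of the root has: no children if `ℓ = 0`; `2^ℓ − 1` children if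
`1 ≤ ℓ ≤ i`; and `j` children if `i < ℓ ≤ i + j`. -/
noncomputable def numCh (n : ℕ) (ℓ : ℕ) : ℕ :=
  if ℓ = 0 then 0 else if ℓ ≤ ii n then 2 ^ ℓ - 1 else jj n

/-- The vertex set: the root, the children `v_0, …, v_{i+j}` of the root, and the
grandchildren. -/
def Vtx (n : ℕ) : Type :=
  Unit ⊕ (Fin (1 + ii n + jj n) ⊕ Σ ℓ : Fin (1 + ii n + jj n), Fin (numCh n ℓ.val))

noncomputable instance (n : ℕ) : Fintype (Vtx n) := by unfold Vtx; infer_instance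

noncomputable instance (n : ℕ) : DecidableEq (Vtx n) := by unfold Vtx; infer_instance

/-- The root. -/
def root (n : ℕ) : Vtx n := Sum.inl ()

/-- The tree: the root is adjacent to each `v_ℓ`, and each `v_ℓ` to its children. -/
def tree (n : ℕ) : SimpleGraph (Vtx n) :=
  SimpleGraph.fromRel fun a b =>
    (∃ ℓ, a = Sum.inl () ∧ b = Sum.inr (Sum.inl ℓ)) ∨
    (∃ (ℓ : Fin (1 + ii n + jj n)) (x : Fin (numCh n ℓ.val)),
      a = Sum.inr (Sum.inl ℓ) ∧ b = Sum.inr (Sum.inr ⟨ℓ, x⟩))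

end Stmt13

/-!
Each non-root vertex has a parent one level closer to the root, so `tree n` is connected and
`x ↦ {x, parent x}` is a bijection from the non-root vertices onto the edges: it is a tree.

For the acquisition, every leaf first moves its unit weight onto its parent, so that `v_ℓ`
carries `1 + numCh n ℓ`, i.e. `2^ℓ` for `ℓ ≤ i` and `j + 1` for `ℓ > i`. The root then absorbs
`v_0, v_1, …` in this order: just before absorbing `v_ℓ` with `ℓ ≤ i + 1` it holds exactly `2^ℓ`,
and `j + 1 ≤ 2^(i+1)`, so every move is legal. Moves preserve the total weight, so all of it ends
on the root; no move is possible from there and the residual set has one vertex, whence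
`a_t = 1`. Finally `|V(T)| = 2^(i+1) + j (j + 1)` lies between `j^2 ≥ n/2` and `(√(n/2) + 3)^2`.
-/

theorem Finset.length_toList_filter {α : Type*} (s : Finset α) (q : α → Prop) [DecidablePred q] :
    (s.toList.filter q).length = (s.filter q).card := by
  classical
  rw [← List.toFinset_card_of_nodup ((Finset.nodup_toList s).filter _), List.toFinset_filter,
    Finset.toList_toFinset]
  simp

theorem Finset.card_filter_sigma_fst_eq {ι : Type*} [Fintype ι] [DecidableEq ι] {β : ι → Type*}
    [∀ i, Fintype (β i)] (i : ι) :
    (Finset.univ.filter fun s : Σ i, β i => s.1 = i).card = Fintype.card (β i) := by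
  rw [show (Finset.univ.filter fun s : Σ i, β i => s.1 = i) =
      ({i} : Finset ι).sigma fun _ => Finset.univ by ext; simp, Finset.card_sigma]
  simp

namespace SimpleGraph

variable {V : Type*} {G : SimpleGraph V}

lemma reachable_of_parent (r : V) (p : V → V) (d : V → ℕ) (hd : ∀ x ≠ r, d (p x) < d x)
    (hadj : ∀ x ≠ r, G.Adj x (p x)) (x : V) : G.Reachable x r := by
  by_cases hx : x = r
  · exact hx ▸ .refl x
  · exact (hadj x hx).reachable.trans (reachable_of_parent r p d hd hadj (p x))
termination_by d x
decreasing_by exact hd x hx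

theorem isTree_of_parent [Finite V] (r : V) (p : V → V) (d : V → ℕ)
    (hd : ∀ x ≠ r, d (p x) < d x)
    (hadj : ∀ a b, G.Adj a b ↔ (a ≠ r ∧ p a = b) ∨ (b ≠ r ∧ p b = a)) : G.IsTree := by
  have hpar (x) (hx : x ≠ r) : G.Adj x (p x) := (hadj x (p x)).2 (.inl ⟨hx, rfl⟩)
  have hconn : G.Connected := (connected_iff_exists_forall_reachable G).2
    ⟨r, fun x => (reachable_of_parent r p d hd hpar x).symm⟩
  let e : {x // x ≠ r} → G.edgeSet := fun x => ⟨s(x, p x), hpar x x.2⟩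
  have he : e.Bijective := by
    refine ⟨fun x y hxy => ?_, ?_⟩
    · rcases Sym2.eq_iff.1 (congrArg Subtype.val hxy) with ⟨h, -⟩ | ⟨hxy, hyx⟩
      · exact Subtype.ext h
      · have hx := hd x x.2
        have hy := hd y y.2
        rw [hyx] at hx
        rw [← hxy] at hy
        omega
    · rintro ⟨e, he⟩
      induction e using Sym2.ind with
      | _ a b =>
      rcases (hadj a b).1 he with ⟨ha, rfl⟩ | ⟨hb, rfl⟩
      · exact ⟨⟨a, ha⟩, rfl⟩
      · exact ⟨⟨b, hb⟩, Subtype.ext Sym2.eq_swap⟩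
  rw [isTree_iff_connected_and_card, Nat.card_congr (Equiv.ofBijective e he).symm]
  exact ⟨hconn, Set.ncard_singleton r ▸ Set.ncard_compl_add_ncard {r}⟩

end SimpleGraph

lemma residualCard_eq_one {V : Type*} {w : V → ℕ} {r : V} (hr : 0 < w r)
    (hw : ∀ x ≠ r, w x = 0) : residualCard w = 1 :=
  Nat.card_eq_one_iff_exists.2
    ⟨⟨r, hr⟩, fun ⟨x, hx⟩ => Subtype.ext (by_contra fun h => hx.ne' (hw x h))⟩

section Acquisition

variable {V : Type*} [DecidableEq V] {G : SimpleGraph V}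

lemma AcqMove.sum_eq [Fintype V] {w w' : V → ℕ} (h : AcqMove G w w') :
    ∑ x, w' x = ∑ x, w x := by
  obtain ⟨u, v, huv, -, -, rfl⟩ := h
  have split (f : V → ℕ) : ∑ x, f x = f v + f u + ∑ x ∈ (Finset.univ.erase v).erase u, f x := by
    rw [add_assoc, Finset.add_sum_erase _ _ (Finset.mem_erase.2 ⟨huv.ne, Finset.mem_univ u⟩),
      Finset.add_sum_erase _ _ (Finset.mem_univ v)]
  have hrest : ∑ x ∈ (Finset.univ.erase v).erase u,
      Function.update (Function.update w u 0) v (w v + w u) x =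
      ∑ x ∈ (Finset.univ.erase v).erase u, w x := Finset.sum_congr rfl fun x hx => by
    obtain ⟨hxu, hxv⟩ : x ≠ u ∧ x ≠ v := by simpa using hx
    simp [hxu, hxv]
  rw [split, split w, hrest]
  simp [huv.ne]

lemma AcqReach.sum_eq [Fintype V] {w w' : V → ℕ} (h : AcqReach G w w') :
    ∑ x, w' x = ∑ x, w x := by
  induction h with
  | refl => rfl
  | tail _ hm ih => rw [hm.sum_eq, ih]

lemma AcqReach.apply_eq_card [Fintype V] {w : V → ℕ} {r : V} (h : AcqReach G (fun _ => 1) w)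
    (hw : ∀ x ≠ r, w x = 0) : w r = Fintype.card V := by
  rw [← Finset.sum_eq_single_of_mem r (Finset.mem_univ r) fun x _ hx => hw x hx, h.sum_eq]
  simp

lemma AcqReach.residualCard_pos [Fintype V] [Nonempty V] {w : V → ℕ}
    (h : AcqReach G (fun _ => 1) w) : 0 < residualCard w := by
  obtain ⟨x, -, hx⟩ := Finset.exists_ne_zero_of_sum_ne_zero (by simp [h.sum_eq] : ∑ x, w x ≠ 0)
  exact Nat.card_pos_iff.2 ⟨⟨⟨x, Nat.pos_of_ne_zero hx⟩⟩, inferInstance⟩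

lemma acqMaximal_of_eq_zero {w : V → ℕ} {r : V} (hw : ∀ x ≠ r, w x = 0) : AcqMaximal G w := by
  rintro ⟨w', u, v, huv, hu, hle, -⟩
  have hur : u = r := by_contra fun h => hu.ne' (hw u h)
  have hv : w v = 0 := hw v (hur ▸ huv.ne')
  omega

theorem atNum_eq_one_of_acqReach [Fintype V] {w : V → ℕ} {r : V}
    (h : AcqReach G (fun _ => 1) w) (hw : ∀ x ≠ r, w x = 0) : atNum G = 1 := by
  have : Nonempty V := ⟨r⟩
  have hr : 0 < w r := h.apply_eq_card hw ▸ Fintype.card_pos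
  have hmem : 1 ∈ {k | ∃ w, AcqReach G (fun _ => 1) w ∧ AcqMaximal G w ∧ residualCard w = k} :=
    ⟨w, h, acqMaximal_of_eq_zero hw, residualCard_eq_one hr hw⟩
  refine le_antisymm (Nat.sInf_le hmem) (le_csInf ⟨1, hmem⟩ ?_)
  rintro _ ⟨w', h', -, rfl⟩
  exact h'.residualCard_pos

lemma update_update_apply_of_ne (w : V → ℕ) {u v x : V} (hx : x ≠ u) :
    Function.update (Function.update w u 0) v (w v + w u) x = w x + if v = x then w u else 0 := by
  by_cases hxv : x = v
  · simp [hxv]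
  · simp [hxv, hx, Ne.symm hxv]

/-- The members `g` of `L` move, in order, all their weight onto `p g`; `hw` says that `L[k]` may
move once the earlier members of `L` with the same target have arrived there. -/
theorem acqReach_transfers (p : V → V) (L : List V) (w : V → ℕ) (hL : L.Nodup)
    (hadj : ∀ g ∈ L, G.Adj g (p g)) (hp : ∀ g ∈ L, p g ∉ L)
    (hw : ∀ k (hk : k < L.length), 0 < w L[k] ∧
      w L[k] ≤ w (p L[k]) + (((L.take k).filter (p · = p L[k])).map w).sum) :
    AcqReach G w (fun x => if x ∈ L then 0 else w x + ((L.filter (p · = x)).map w).sum) := by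
  induction L generalizing w with
  | nil =>
    simp only [List.not_mem_nil, if_false, List.filter_nil, List.map_nil, List.sum_nil, add_zero]
    exact .refl
  | cons g L ih =>
    obtain ⟨hgL, hL⟩ := List.nodup_cons.1 hL
    set w₁ := Function.update (Function.update w g 0) (p g) (w (p g) + w g)
    have hw₁ (x) (hx : x ≠ g) : w₁ x = w x + if p g = x then w g else 0 :=
      update_update_apply_of_ne w hx
    have hw₁L (x) (hx : x ∈ L) : w₁ x = w x := by
      rw [hw₁ x (ne_of_mem_of_not_mem hx hgL), if_neg fun h : p g = x =>
        hp g List.mem_cons_self (h ▸ List.mem_cons_of_mem g hx), add_zero]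
    have hsum (l : List V) (hl : l ⊆ L) : (l.map w₁).sum = (l.map w).sum :=
      congrArg List.sum (List.map_congr_left fun x hx => hw₁L x (hl hx))
    have hmove : AcqMove G w w₁ := by
      obtain ⟨h0, hle⟩ := hw 0 (by simp)
      exact ⟨g, p g, hadj g List.mem_cons_self, h0, by simpa using hle, rfl⟩
    refine .head hmove (?_ : AcqReach G w₁ _)
    convert ih w₁ hL (fun x hx => hadj x (.tail g hx))
      (fun x hx hpx => hp x (.tail g hx) (.tail g hpx)) ?_ using 2 with x
    · by_cases hxL : x ∈ L
      · simp [hxL]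
      by_cases hxg : x = g
      · subst hxg
        have : L.filter (p · = x) = [] := List.filter_eq_nil_iff.2 fun y hy h =>
          hp y (.tail x hy) (of_decide_eq_true h ▸ List.mem_cons_self)
        simp [hxL, this, w₁, (hadj x List.mem_cons_self).ne]
      · rw [hsum _ (List.filter_subset_self L), hw₁ x hxg, List.filter_cons]
        split_ifs <;> simp_all [add_assoc]
    · intro k hk
      obtain ⟨h0, hle⟩ := hw (k + 1) (by simpa using hk)
      simp only [List.getElem_cons_succ, List.take_succ_cons, List.filter_cons,
        decide_eq_true_eq] at h0 hle
      have hk' := List.getElem_mem hk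
      rw [hw₁L _ hk', hsum _ (List.Subset.trans (List.filter_subset_self _) (List.take_subset _ _)),
        hw₁ _ fun h => hp _ (.tail g hk') (h ▸ List.mem_cons_self)]
      refine ⟨h0, ?_⟩
      split_ifs at hle ⊢
      · simp only [List.map_cons, List.sum_cons] at hle
        omega
      · simpa using hle

end Acquisition

open Topology in
theorem tendsto_div_sq_of_le_add_sq {α : Type*} {l : Filter α} {f s : α → ℝ} (c : ℝ)
    (hs : Tendsto s l atTop) (hlow : ∀ᶠ x in l, s x ^ 2 ≤ f x)
    (hup : ∀ᶠ x in l, f x ≤ (s x + c) ^ 2) : Tendsto (fun x => f x / s x ^ 2) l (𝓝 1) := by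
  have hlim : Tendsto (fun x => (1 + c / s x) ^ 2) l (𝓝 1) := by
    simpa using ((tendsto_const_nhds.div_atTop hs).const_add 1).pow 2
  refine tendsto_of_tendsto_of_tendsto_of_le_of_le' tendsto_const_nhds hlim ?_ ?_
  · filter_upwards [hlow, hs.eventually_gt_atTop 0] with x hx hsx
    rwa [le_div_iff₀ (by positivity), one_mul]
  · filter_upwards [hup, hs.eventually_gt_atTop 0] with x hx hsx
    rw [div_le_iff₀ (by positivity)]
    calc f x ≤ (s x + c) ^ 2 := hx
      _ = (1 + c / s x) ^ 2 * s x ^ 2 := by field_simp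

namespace Stmt13

variable {n : ℕ}

def child (n : ℕ) (ℓ : Fin (1 + ii n + jj n)) : Vtx n := Sum.inr (Sum.inl ℓ)

def grandchild (n : ℕ) (s : Σ ℓ : Fin (1 + ii n + jj n), Fin (numCh n ℓ.val)) : Vtx n :=
  Sum.inr (Sum.inr s)

def parent : Vtx n → Vtx n
  | Sum.inr (Sum.inr s) => child n s.1
  | _ => root n

def depth : Vtx n → ℕ
  | Sum.inl _ => 0
  | Sum.inr (Sum.inl _) => 1
  | Sum.inr (Sum.inr _) => 2

lemma Vtx.eq_root_or_child_or_grandchild (x : Vtx n) :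
    x = root n ∨ (∃ ℓ, x = child n ℓ) ∨ ∃ s, x = grandchild n s := by
  rcases x with ⟨⟨⟩⟩ | ℓ | s
  exacts [.inl rfl, .inr (.inl ⟨ℓ, rfl⟩), .inr (.inr ⟨s, rfl⟩)]

@[simp] lemma child_ne_root (ℓ : Fin (1 + ii n + jj n)) : child n ℓ ≠ root n := Sum.inr_ne_inl

@[simp] lemma grandchild_ne_root (s : Σ ℓ : Fin (1 + ii n + jj n), Fin (numCh n ℓ)) :
    grandchild n s ≠ root n := Sum.inr_ne_inl

@[simp] lemma grandchild_ne_child (s : Σ ℓ : Fin (1 + ii n + jj n), Fin (numCh n ℓ))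
    (ℓ : Fin (1 + ii n + jj n)) : grandchild n s ≠ child n ℓ :=
  fun h => Sum.inr_ne_inl (Sum.inr_injective h)

@[simp] lemma child_inj {ℓ m : Fin (1 + ii n + jj n)} : child n ℓ = child n m ↔ ℓ = m :=
  ⟨fun h => Sum.inl_injective (Sum.inr_injective h), congrArg _⟩

@[simp] lemma parent_child (ℓ : Fin (1 + ii n + jj n)) : parent (child n ℓ) = root n := rfl

@[simp] lemma parent_grandchild (s : Σ ℓ : Fin (1 + ii n + jj n), Fin (numCh n ℓ)) :
    parent (grandchild n s) = child n s.1 := rfl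

lemma tree_adj_iff (a b : Vtx n) :
    (tree n).Adj a b ↔ (a ≠ root n ∧ parent a = b) ∨ (b ≠ root n ∧ parent b = a) := by
  rw [tree, SimpleGraph.fromRel_adj]
  rcases a with ⟨⟨⟩⟩ | ℓ | ⟨ℓ, x⟩ <;> rcases b with ⟨⟨⟩⟩ | m | ⟨m, y⟩ <;>
    simp [Vtx, root, parent, child]
  all_goals rintro rfl; exact ⟨_, HEq.rfl⟩

lemma tree_adj_parent {x : Vtx n} (hx : x ≠ root n) : (tree n).Adj x (parent x) :=
  (tree_adj_iff _ _).2 (.inl ⟨hx, rfl⟩)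

lemma depth_parent_lt : ∀ x : Vtx n, x ≠ root n → depth (parent x) < depth x
  | Sum.inl (), h => absurd rfl h
  | Sum.inr (Sum.inl _), _ => Nat.zero_lt_one
  | Sum.inr (Sum.inr _), _ => Nat.one_lt_two

theorem tree_isTree (n : ℕ) : (tree n).IsTree :=
  SimpleGraph.isTree_of_parent (root n) parent depth depth_parent_lt tree_adj_iff

lemma one_add_sum_range_eq_two_pow {k : ℕ} (hk : k ≤ ii n + 1) :
    1 + ∑ m ∈ Finset.range k, (1 + numCh n m) = 2 ^ k := by
  induction k with
  | zero => rfl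
  | succ k ih =>
    rw [Finset.sum_range_succ, ← add_assoc, ih (by omega), pow_succ]
    rcases k with _ | k
    · rfl
    · rw [numCh, if_neg k.succ_ne_zero, if_pos (by omega)]
      have := Nat.one_le_two_pow (n := k + 1)
      omega

-- `1 + ∑ m ∈ range k, (1 + numCh n m)` is the weight of the root just before it absorbs `v_k`.
lemma numCh_le_sum_range (k : ℕ) : numCh n k ≤ ∑ m ∈ Finset.range k, (1 + numCh n m) := by
  by_cases hk : k ≤ ii n
  · have := one_add_sum_range_eq_two_pow (n := n) (Nat.le_succ_of_le hk)
    rcases k with _ | k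
    · simp [numCh]
    · rw [numCh, if_neg k.succ_ne_zero, if_pos hk]
      omega
  · have hj : jj n < 2 ^ (ii n + 1) := Nat.lt_pow_succ_log_self one_lt_two _
    have := one_add_sum_range_eq_two_pow (n := n) le_rfl
    have := Finset.sum_le_sum_of_subset (f := fun m => 1 + numCh n m)
      (Finset.range_subset_range.2 (by omega : ii n + 1 ≤ k))
    rw [numCh, if_neg (by omega), if_neg hk]
    omega

lemma card_vtx : Fintype.card (Vtx n) = 2 ^ (ii n + 1) + jj n * (jj n + 1) := by
  have hcard : Fintype.card (Vtx n) =
      1 + ∑ m ∈ Finset.range (ii n + 1 + jj n), (1 + numCh n m) := by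
    rw [show ii n + 1 + jj n = 1 + ii n + jj n by omega, ← Fin.sum_univ_eq_sum_range]
    simp [Vtx, Fintype.card_sum, Fintype.card_sigma, Finset.sum_add_distrib]
  have hlate (x : ℕ) (_ : x ∈ Finset.range (jj n)) : 1 + numCh n (ii n + 1 + x) = jj n + 1 := by
    rw [numCh, if_neg (by omega), if_neg (by omega), add_comm]
  rw [hcard, Finset.sum_range_add, ← add_assoc, one_add_sum_range_eq_two_pow le_rfl,
    Finset.sum_congr rfl hlate, Finset.sum_const, Finset.card_range, smul_eq_mul]

lemma half_le_card (n : ℕ) : (n : ℝ) / 2 ≤ Fintype.card (Vtx n) := by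
  have hj : √((n : ℝ) / 2) ≤ jj n := Nat.le_ceil _
  calc (n : ℝ) / 2 = √((n : ℝ) / 2) ^ 2 := (Real.sq_sqrt (by positivity)).symm
    _ ≤ (jj n : ℝ) ^ 2 := by gcongr
    _ ≤ Fintype.card (Vtx n) := by
      rw [card_vtx]
      push_cast
      nlinarith [pow_pos (two_pos (α := ℝ)) (ii n + 1)]

lemma card_le_sqrt_add_three_sq (hn : 0 < n) :
    (Fintype.card (Vtx n) : ℝ) ≤ (√((n : ℝ) / 2) + 3) ^ 2 := by
  have hj : jj n ≠ 0 := (Nat.ceil_pos.2 (Real.sqrt_pos.2 (by positivity))).ne'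
  have hpow : 2 ^ (ii n + 1) ≤ 2 * jj n := by
    rw [pow_succ, mul_comm]
    exact Nat.mul_le_mul_left 2 (Nat.pow_log_le_self 2 hj)
  have hj' : (jj n : ℝ) < √((n : ℝ) / 2) + 1 := Nat.ceil_lt_add_one (Real.sqrt_nonneg _)
  have hcard : Fintype.card (Vtx n) ≤ (jj n + 2) ^ 2 := by
    rw [card_vtx]
    nlinarith
  calc (Fintype.card (Vtx n) : ℝ) ≤ ((jj n : ℝ) + 2) ^ 2 := by exact_mod_cast hcard
    _ ≤ (√((n : ℝ) / 2) + 3) ^ 2 := by gcongr ?_ ^ 2; linarith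

lemma exists_acqReach_leaves_to_parents : ∃ w, AcqReach (tree n) (fun _ => 1) w ∧
    w (root n) = 1 ∧ (∀ ℓ, w (child n ℓ) = 1 + numCh n ℓ) ∧ ∀ s, w (grandchild n s) = 0 := by
  set L := (Finset.univ : Finset (Σ ℓ : Fin (1 + ii n + jj n), Fin (numCh n ℓ))).toList.map
    (grandchild n)
  have hmem (x : Vtx n) : x ∈ L ↔ ∃ s, grandchild n s = x := by simp [L]
  refine ⟨_, acqReach_transfers parent L (fun _ => 1)
    ((Finset.nodup_toList _).map fun a b h => Sum.inr_injective (Sum.inr_injective h))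
    (fun g hg => tree_adj_parent (by obtain ⟨s, rfl⟩ := (hmem g).1 hg; simp))
    (fun g hg => by obtain ⟨s, rfl⟩ := (hmem g).1 hg; simp [hmem])
    (fun k hk => ⟨one_pos, Nat.le_add_right 1 _⟩), ?_, fun ℓ => ?_, fun s => ?_⟩ <;>
  simp [hmem, L, List.filter_map, Function.comp_def, Finset.length_toList_filter,
    Finset.card_filter_sigma_fst_eq]

lemma exists_acqReach_root : ∃ w, AcqReach (tree n) (fun _ => 1) w ∧ ∀ x ≠ root n, w x = 0 := by
  obtain ⟨w, hw, hroot, hchild, hgrand⟩ := exists_acqReach_leaves_to_parents (n := n)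
  set L := (List.finRange (1 + ii n + jj n)).map (child n)
  have hmem (x : Vtx n) : x ∈ L ↔ ∃ ℓ, child n ℓ = x := by simp [L]
  have hprefix (k : ℕ) (hk : k ≤ 1 + ii n + jj n) :
      ((L.take k).map w).sum = ∑ m ∈ Finset.range k, (1 + numCh n m) := by
    have : (L.take k).map w =
        (((List.finRange (1 + ii n + jj n)).take k).map Fin.val).map (1 + numCh n ·) := by
      simp only [L, ← List.map_take, List.map_map]
      exact List.map_congr_left fun ℓ _ => hchild ℓ
    rw [this, List.map_take, List.map_coe_finRange_eq_range, List.take_range,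
      Nat.min_eq_left hk, ← List.sum_toFinset _ List.nodup_range, List.toFinset_range]
  refine ⟨_, hw.trans (acqReach_transfers parent L w
    ((List.nodup_finRange _).map fun _ _ => child_inj.1)
    (fun g hg => tree_adj_parent (by obtain ⟨ℓ, rfl⟩ := (hmem g).1 hg; simp))
    (fun g hg => by obtain ⟨ℓ, rfl⟩ := (hmem g).1 hg; simp [hmem])
    (fun k hk => ?_)), fun x hx => ?_⟩
  · have hkN : k < 1 + ii n + jj n := by simpa [L] using hk
    have hfilter : (L.take k).filter (parent · = parent L[k]) = L.take k :=
      List.filter_eq_self.2 fun g hg => by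
        obtain ⟨ℓ, rfl⟩ := (hmem g).1 (List.mem_of_mem_take hg)
        simp [L]
    rw [hfilter, hprefix k hkN.le]
    simp only [L, List.getElem_map, List.getElem_finRange, hchild, parent_child, hroot,
      Fin.val_cast]
    exact ⟨by omega, Nat.add_le_add_left (numCh_le_sum_range k) 1⟩
  · obtain rfl | ⟨ℓ, rfl⟩ | ⟨s, rfl⟩ := x.eq_root_or_child_or_grandchild
    · exact absurd rfl hx
    · simp [hmem]
    · have : L.filter (parent · = grandchild n s) = [] :=
        List.filter_eq_nil_iff.2 fun g hg => by
          obtain ⟨ℓ, rfl⟩ := (hmem g).1 hg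
          simp [(grandchild_ne_root s).symm]
      simp [hmem, hgrand, this]

end Stmt13

open Stmt13 in
/-- The explicitly constructed rooted tree `T` (root `v` with children
`v_0, …, v_{i+j}`, where `j = ⌈√(n/2)⌉`, `i` is largest with `2^i ≤ j`, `v_0` is a leaf,
`v_ℓ` has `2^ℓ − 1` leaf children for `1 ≤ ℓ ≤ i` and `j` leaf children otherwise) is a
tree on `m ≥ n/2` vertices, with `|V(T)| ≤ (1 + o(1))·n/2`, whose root can acquire all
the weight; in particular `a_t(T) = 1`. -/
theorem stmt13 :
    (∀ n : ℕ, 2 ≤ n →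
      (tree n).IsTree ∧
      (n : ℝ) / 2 ≤ Fintype.card (Vtx n) ∧
      (∃ w, AcqReach (tree n) (fun _ => 1) w ∧ w (root n) = Fintype.card (Vtx n)) ∧
      atNum (tree n) = 1) ∧
    Tendsto (fun n : ℕ => (Fintype.card (Vtx n) : ℝ) / ((n : ℝ) / 2)) atTop (nhds 1) := by
  refine ⟨fun n _ => ?_, ?_⟩
  · obtain ⟨w, hw, hzero⟩ := exists_acqReach_root (n := n)
    exact ⟨tree_isTree n, half_le_card n, ⟨w, hw, hw.apply_eq_card hzero⟩,
      atNum_eq_one_of_acqReach hw hzero⟩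
  · have hs : Tendsto (fun n : ℕ => √((n : ℝ) / 2)) atTop atTop :=
      Real.tendsto_sqrt_atTop.comp (tendsto_natCast_atTop_atTop.atTop_div_const two_pos)
    have hsq (n : ℕ) : √((n : ℝ) / 2) ^ 2 = (n : ℝ) / 2 := Real.sq_sqrt (by positivity)
    refine (tendsto_div_sq_of_le_add_sq (f := fun n => (Fintype.card (Vtx n) : ℝ)) 3 hs
      (.of_forall fun n => (hsq n).symm ▸ half_le_card n) ?_).congr fun n => by rw [hsq]
    filter_upwards [eventually_gt_atTop 0] with n hn using card_le_sqrt_add_three_sq hn
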